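/- arXiv:2511.15696 — 7 statements merged into one kernel-verified Lean document; each statement's English description precedes it below -/
import Mathlib

section
/- Let V be a nonzero finite-dimensional real vector space and let H be a subgroup of GL(V) that is connected in the norm topology and acts irreducibly on V. Then for all linear subspaces W, W' ⊆ V there exists h ∈ H such that dim((h·W) ∩ W') · dim V ≤ dim W · dim W'. -/
/-!
For a subspace `M` let `μ M` be the minimum over `g ∈ H` of `dim (g • W ⊓ M)`. Because `H` is
connected, its Zariski closure is irreducible: a minimal Zariski-closed neighbourhood of `1` in `H`
is stabilised by an open subgroup, hence by all of `H`. So the algebra of matrix coefficients is a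
domain. Since `dim (g • W ⊓ M) ≤ μ M` wherever a suitable minor (a matrix coefficient polynomial)
does not vanish, one `g` is generic for two subspaces at once, and `μ` is supermodular. Then
`ψ M = μ M * dim V - dim W * dim M` is supermodular and `H`-invariant, so the largest subspace on
which `ψ` is maximal is `H`-invariant, hence `⊥` or `⊤`. Both give `ψ = 0`, so `ψ ≤ 0`, and
`ψ W' ≤ 0` is the claim.
-/

open Set Module Topology Pointwise TopologicalSpace

theorem eq_univ_of_mem_nhds_one_of_smul_subset {G : Type*} [Group G] [TopologicalSpace G]
    [IsTopologicalGroup G] [ConnectedSpace G] {Z : Set G} (hZ : Z ∈ 𝓝 1)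
    (hsub : ∀ v ∈ interior Z, v • Z ⊆ Z) : Z = univ := by
  have hstab : (MulAction.stabilizer G Z : Set G) ∈ 𝓝 1 := by
    have hO : interior Z ∩ (interior Z)⁻¹ ∈ 𝓝 1 :=
      Filter.inter_mem (interior_mem_nhds.mpr hZ) (inv_mem_nhds_one G (interior_mem_nhds.mpr hZ))
    refine Filter.mem_of_superset hO fun u ⟨hu, hu'⟩ => ?_
    exact (hsub u hu).antisymm (Set.subset_smul_set_iff.mpr (hsub u⁻¹ hu'))
  have hopen := (MulAction.stabilizer G Z).isOpen_of_mem_nhds hstab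
  have huniv := IsClopen.eq_univ ⟨(MulAction.stabilizer G Z).isClosed_of_isOpen hopen, hopen⟩
    ⟨1, one_mem _⟩
  refine eq_univ_of_forall fun g => ?_
  have hg : g • Z = Z := MulAction.mem_stabilizer_iff.mp
    (SetLike.mem_coe.mp (huniv.symm ▸ mem_univ g))
  simpa [hg] using Set.smul_mem_smul_set (a := g) (mem_of_mem_nhds hZ)

theorem isPreirreducible_range_of_equivariant {G X : Type*} [Group G] [TopologicalSpace G]
    [IsTopologicalGroup G] [ConnectedSpace G] [TopologicalSpace X] [NoetherianSpace X]
    {π : G → X} (hπ : Continuous π) (c : G → X → X) (hc : ∀ g, Continuous (c g))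
    (hπc : ∀ g x, π (g * x) = c g (π x)) : IsPreirreducible (range π) := by
  obtain ⟨Y, hY1 : π ⁻¹' Y ∈ 𝓝 1, hYmin⟩ :=
    wellFounded_lt.has_min {Y : Closeds X | π ⁻¹' Y ∈ 𝓝 1} ⟨⊤, by simp⟩
  -- minimality of `Y`, applied to `Y ⊓ (c t)⁻¹' B`
  have key : ∀ (B : Closeds X) (t : G), π ⁻¹' B ∈ 𝓝 t → ∀ x, π x ∈ Y → π (t * x) ∈ B := by
    intro B t hB x hx
    let Y' : Closeds X := Y ⊓ ⟨c t ⁻¹' B, B.isClosed.preimage (hc t)⟩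
    have hY' : π ⁻¹' Y' ∈ 𝓝 1 := by
      have hmul : Filter.Tendsto (t * ·) (𝓝 1) (𝓝 t) :=
        (continuous_const_mul t).tendsto' 1 t (mul_one t)
      refine Filter.inter_mem hY1 (Filter.mem_of_superset (hmul hB) fun y hy => ?_)
      show π y ∈ c t ⁻¹' B
      simpa [hπc] using hy
    have hYY' : Y' = Y := eq_of_le_of_not_lt inf_le_left (hYmin Y' hY')
    simpa [hπc] using (hYY'.ge hx).2
  have hY : range π ⊆ Y := by
    rintro _ ⟨g, rfl⟩
    have hZ := eq_univ_of_mem_nhds_one_of_smul_subset hY1 fun v hv =>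
      Set.smul_set_subset_iff.mpr fun x hx => key Y v (mem_interior_iff_mem_nhds.mp hv) x hx
    exact (hZ ▸ mem_univ g :)
  refine isPreirreducible_iff_isClosed_union_isClosed.mpr fun z₁ z₂ hz₁ hz₂ hcover => ?_
  refine or_iff_not_imp_left.mpr fun h => ?_
  obtain ⟨_, ⟨t, rfl⟩, ht⟩ := not_subset.mp h
  have hB : π ⁻¹' z₂ ∈ 𝓝 t :=
    Filter.mem_of_superset ((hz₁.isOpen_compl.preimage hπ).mem_nhds ht)
      fun x hx => (hcover ⟨x, rfl⟩).resolve_left hx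
  rintro _ ⟨x, rfl⟩
  simpa using key ⟨z₂, hz₂⟩ t hB (t⁻¹ * x) (hY ⟨_, rfl⟩)

theorem noZeroDivisors_of_connectedSpace {G K : Type*} [Group G] [TopologicalSpace G]
    [IsTopologicalGroup G] [ConnectedSpace G] [CommRing K] [IsDomain K] [TopologicalSpace K]
    [T1Space K] (A : Subalgebra K (G → K)) [IsNoetherianRing A] (hcont : ∀ f ∈ A, Continuous f)
    (hmul : ∀ g, ∀ f ∈ A, (fun x => f (g * x)) ∈ A) : NoZeroDivisors A := by
  let ev (x : G) : A →+* K := (Pi.evalRingHom (fun _ => K) x).comp A.val.toRingHom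
  let π (x : G) : PrimeSpectrum A := ⟨RingHom.ker (ev x), RingHom.ker_isPrime _⟩
  let τ (g : G) : A →+* A := RingHom.codRestrict
    ((RingHom.pi fun x => Pi.evalRingHom (fun _ => K) (g * x)).comp A.val.toRingHom) A
    fun f => hmul g f f.2
  have hπ : Continuous π := by
    refine PrimeSpectrum.isTopologicalBasis_basic_opens.continuous_iff.mpr ?_
    rintro _ ⟨f, rfl⟩
    exact isOpen_compl_singleton.preimage (hcont f f.2)
  have hirr := isPreirreducible_range_of_equivariant hπ _
    (fun g => PrimeSpectrum.continuous_comap (τ g)) (fun _ _ => rfl)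
  refine ⟨fun {a b} hab => ?_⟩
  by_contra! h
  obtain ⟨x, ha⟩ := Function.ne_iff.mp (Subtype.coe_ne_coe.mpr h.1)
  obtain ⟨y, hb⟩ := Function.ne_iff.mp (Subtype.coe_ne_coe.mpr h.2)
  obtain ⟨_, ⟨z, rfl⟩, hza, hzb⟩ := hirr _ _ (PrimeSpectrum.basicOpen a).2
    (PrimeSpectrum.basicOpen b).2 ⟨π x, ⟨x, rfl⟩, ha⟩ ⟨π y, ⟨y, rfl⟩, hb⟩
  exact mul_ne_zero hza hzb (congrFun (congrArg Subtype.val hab) z)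

theorem exists_ne_zero_finrank_range_le {X k E Q : Type*} [Field k] [AddCommGroup E]
    [Module k E] [AddCommGroup Q] [Module k Q] [FiniteDimensional k Q]
    (A : Subalgebra k (X → k)) (F : X → E →ₗ[k] Q)
    (hF : ∀ (ψ : Dual k Q) e, (fun x => ψ (F x e)) ∈ A) (x₀ : X) :
    ∃ f ∈ A, f x₀ ≠ 0 ∧
      ∀ x, f x ≠ 0 → finrank k (LinearMap.range (F x₀)) ≤ finrank k (LinearMap.range (F x)) := by
  set R := LinearMap.range (F x₀)
  let B := Module.finBasis k R
  choose e he using fun i => (B i).2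
  obtain ⟨π, hπ⟩ := R.subtype.exists_leftInverse_of_injective R.ker_subtype
  let Φ : Q →ₗ[k] Fin (finrank k R) → k := B.equivFun.toLinearMap ∘ₗ π
  -- `f x` is the minor of `F x` on the lifts `e i` of a basis of `R` and its coordinates `Φ`
  let M : Matrix (Fin (finrank k R)) (Fin (finrank k R)) A := Matrix.of fun i j =>
    ⟨fun x => Φ (F x (e i)) j, hF (LinearMap.proj j ∘ₗ Φ) (e i)⟩
  have hdet : ∀ x, (M.det : X → k) x = (Matrix.of fun i j => Φ (F x (e i)) j).det := fun x => by
    rw [show (M.det : X → k) x = ((Pi.evalRingHom _ x).comp A.val.toRingHom) M.det from rfl,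
      RingHom.map_det]
    rfl
  refine ⟨M.det, M.det.2, ?_, fun x hx => ?_⟩
  · have hΦ : ∀ i, Φ (F x₀ (e i)) = Pi.single i 1 := fun i => by
      have hπB : π (B i) = B i := LinearMap.congr_fun hπ (B i)
      simp [Φ, he i, hπB, Finsupp.single_eq_pi_single]
    have h1 : (Matrix.of fun i j => Φ (F x₀ (e i)) j) = 1 := by
      ext i j
      simp [hΦ, Matrix.one_apply, Pi.single_apply, eq_comm]
    simp [hdet, h1]
  · rw [hdet] at hx
    have hli : LinearIndependent k (Φ ∘ fun i => F x (e i)) :=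
      Matrix.linearIndependent_rows_of_det_ne_zero hx
    calc finrank k R = finrank k (Submodule.span k (range fun i => F x (e i))) := by
          rw [finrank_span_eq_card hli.of_comp, Fintype.card_fin]
      _ ≤ _ := Submodule.finrank_mono
          (Submodule.span_le.mpr (range_subset_iff.mpr fun i => LinearMap.mem_range_self _ _))

section

variable {k V V' : Type*} [Field k] [AddCommGroup V] [Module k V] [AddCommGroup V'] [Module k V']

theorem finrank_map_inf_add_finrank_range [FiniteDimensional k V] {φ : V →ₗ[k] V'}
    (hφ : Function.Injective φ) (W : Submodule k V) (M : Submodule k V') :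
    finrank k ↥(W.map φ ⊓ M) + finrank k (LinearMap.range (M.mkQ ∘ₗ φ ∘ₗ W.subtype)) =
      finrank k W := by
  have hinj : Function.Injective (φ ∘ₗ W.subtype) := hφ.comp W.injective_subtype
  have hker : (LinearMap.ker (M.mkQ ∘ₗ φ ∘ₗ W.subtype)).map (φ ∘ₗ W.subtype) = W.map φ ⊓ M := by
    rw [LinearMap.ker_comp, Submodule.ker_mkQ, Submodule.map_comap_eq, LinearMap.range_comp,
      Submodule.range_subtype, inf_comm]
  rw [← hker, ← (Submodule.equivMapOfInjective _ hinj _).finrank_eq, add_comm,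
    LinearMap.finrank_range_add_finrank_ker]

theorem finrank_inf_add_finrank_inf_le [FiniteDimensional k V] (U A B : Submodule k V) :
    finrank k ↥(U ⊓ A) + finrank k ↥(U ⊓ B) ≤
      finrank k ↥(U ⊓ (A ⊔ B)) + finrank k ↥(U ⊓ (A ⊓ B)) := by
  rw [← Submodule.finrank_sup_add_finrank_inf_eq, inf_inf_inf_comm, inf_idem]
  gcongr
  exact Submodule.finrank_mono <|
    sup_le (inf_le_inf_left U le_sup_left) (inf_le_inf_left U le_sup_right)

end

theorem exists_isGreatest_maximizers_of_supermodular {L : Type*} [Lattice L] [WellFoundedGT L]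
    [Nonempty L] (ψ : L → ℤ) (hψ : ∀ a b, ψ a + ψ b ≤ ψ (a ⊔ b) + ψ (a ⊓ b))
    (hbdd : BddAbove (range ψ)) : ∃ N, IsGreatest {a | ∀ b, ψ b ≤ ψ a} N := by
  obtain ⟨a₀, ha₀⟩ := Int.csSup_mem (range_nonempty ψ) hbdd
  have hsup : ∀ a ∈ {a | ∀ b, ψ b ≤ ψ a}, ∀ a' ∈ {a | ∀ b, ψ b ≤ ψ a}, ∀ b, ψ b ≤ ψ (a ⊔ a') :=
    fun a ha a' ha' b => by linarith [ha b, ha' (a ⊓ a'), hψ a a']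
  obtain ⟨N, hN, hNmax⟩ := wellFounded_gt.has_min {a | ∀ b, ψ b ≤ ψ a}
    ⟨a₀, fun b => ha₀ ▸ le_csSup hbdd ⟨b, rfl⟩⟩
  refine ⟨N, hN, fun a ha => ?_⟩
  exact le_sup_left.trans (eq_of_le_of_not_lt le_sup_right (hNmax _ (hsup a ha N hN))).ge

namespace Representation

variable {k G V : Type*} [Field k] [AddCommGroup V] [Module k V]

section Monoid

variable [Monoid G] (ρ : Representation k G V)

/-- The coordinate ring of the Zariski closure of `ρ(G)`, as functions on `G`. -/
def coeffAlgebra : Subalgebra k (G → k) :=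
  Algebra.adjoin k (range fun Λ : Dual k (Module.End k V) => fun g => Λ (ρ g))

theorem comp_mem_coeffAlgebra (Λ : Dual k (Module.End k V)) :
    (fun g => Λ (ρ g)) ∈ ρ.coeffAlgebra :=
  Algebra.subset_adjoin ⟨Λ, rfl⟩

theorem apply_mem_coeffAlgebra (φ : Dual k V) (v : V) :
    (fun g => φ (ρ g v)) ∈ ρ.coeffAlgebra :=
  ρ.comp_mem_coeffAlgebra (φ ∘ₗ LinearMap.applyₗ v)

theorem mul_left_mem_coeffAlgebra (g : G) {f : G → k} (hf : f ∈ ρ.coeffAlgebra) :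
    (fun x => f (g * x)) ∈ ρ.coeffAlgebra := by
  let τ : (G → k) →ₐ[k] G → k := AlgHom.pi fun x => Pi.evalAlgHom k _ (g * x)
  refine (Algebra.adjoin_le (S := ρ.coeffAlgebra.comap τ) ?_) hf
  rintro _ ⟨Λ, rfl⟩
  show (fun x => Λ (ρ (g * x))) ∈ ρ.coeffAlgebra
  simpa using ρ.comp_mem_coeffAlgebra (Λ ∘ₗ LinearMap.mulLeft k (ρ g))

theorem continuous_of_mem_coeffAlgebra [TopologicalSpace G] [TopologicalSpace k]
    [IsTopologicalRing k] (hρ : ∀ Λ : Dual k (Module.End k V), Continuous fun g => Λ (ρ g))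
    {f : G → k} (hf : f ∈ ρ.coeffAlgebra) : Continuous f :=
  Algebra.adjoin_le (S := continuousSubalgebra (α := G) (R := k) (A := k))
    (by rintro _ ⟨Λ, rfl⟩; exact hρ Λ) hf

instance [FiniteDimensional k V] : IsNoetherianRing ρ.coeffAlgebra := by
  let L : Dual k (Module.End k V) →ₗ[k] G → k := LinearMap.pi fun g => Dual.eval k _ (ρ g)
  obtain ⟨t, ht⟩ := Module.Finite.iff_fg.mp (inferInstance : Module.Finite k (LinearMap.range L))
  have hfg : ρ.coeffAlgebra.FG := ⟨t, by
    rw [coeffAlgebra, ← Algebra.adjoin_span, ht]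
    rfl⟩
  have := (Subalgebra.fg_iff_finiteType _).mp hfg
  exact Algebra.FiniteType.isNoetherianRing k _

end Monoid

variable [Group G] (ρ : Representation k G V)

noncomputable def minFinrankInf (W M : Submodule k V) : ℕ :=
  ⨅ g, finrank k ↥(W.map (ρ g) ⊓ M)

variable (W M : Submodule k V)

theorem minFinrankInf_le (g : G) : ρ.minFinrankInf W M ≤ finrank k ↥(W.map (ρ g) ⊓ M) :=
  ciInf_le (OrderBot.bddBelow _) g

theorem exists_finrank_eq_minFinrankInf :
    ∃ g, finrank k ↥(W.map (ρ g) ⊓ M) = ρ.minFinrankInf W M :=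
  ciInf_mem _

theorem finrank_map (g : G) : finrank k ↥(M.map (ρ g)) = finrank k M :=
  (LinearEquiv.ofBijective (ρ g) (ρ.apply_bijective g)).finrank_map_eq M

theorem minFinrankInf_map (g : G) :
    ρ.minFinrankInf W (M.map (ρ g)) = ρ.minFinrankInf W M := by
  have h : ∀ x, W.map (ρ (g * x)) ⊓ M.map (ρ g) = (W.map (ρ x) ⊓ M).map (ρ g) := fun x => by
    rw [Submodule.map_inf _ (ρ.apply_bijective g).injective, map_mul, Module.End.mul_eq_comp,
      Submodule.map_comp]
  unfold minFinrankInf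
  rw [← (Equiv.mulLeft g).iInf_comp]
  exact iInf_congr fun x => by rw [Equiv.coe_mulLeft, h, finrank_map]

theorem minFinrankInf_top : ρ.minFinrankInf W ⊤ = finrank k W := by
  have h : ∀ g, finrank k ↥(W.map (ρ g) ⊓ ⊤) = finrank k W := fun g => by
    rw [inf_top_eq, finrank_map]
  simp only [minFinrankInf, h, ciInf_const]

theorem minFinrankInf_bot : ρ.minFinrankInf W ⊥ = 0 := by
  have h : ∀ g, finrank k ↥(W.map (ρ g) ⊓ ⊥) = 0 := fun g => by rw [inf_bot_eq, finrank_bot]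
  simp only [minFinrankInf, h, ciInf_const]

variable [FiniteDimensional k V]

theorem exists_ne_zero_finrank_le_minFinrankInf :
    ∃ f : ρ.coeffAlgebra, f ≠ 0 ∧
      ∀ g, (f : G → k) g ≠ 0 → finrank k ↥(W.map (ρ g) ⊓ M) ≤ ρ.minFinrankInf W M := by
  obtain ⟨g₀, hg₀⟩ := ρ.exists_finrank_eq_minFinrankInf W M
  obtain ⟨f, hfA, hf₀, hf⟩ := exists_ne_zero_finrank_range_le ρ.coeffAlgebra
    (fun g => M.mkQ ∘ₗ ρ g ∘ₗ W.subtype)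
    (fun ψ w => ρ.apply_mem_coeffAlgebra (ψ ∘ₗ M.mkQ) w) g₀
  refine ⟨⟨f, hfA⟩, fun h => hf₀ (by simp [show f = 0 from congrArg Subtype.val h]), fun g hg => ?_⟩
  have h₀ := finrank_map_inf_add_finrank_range (ρ.apply_bijective g₀).injective W M
  have h := finrank_map_inf_add_finrank_range (ρ.apply_bijective g).injective W M
  have := hf g hg
  omega

theorem minFinrankInf_add_minFinrankInf_le [NoZeroDivisors ρ.coeffAlgebra] (A B : Submodule k V) :
    ρ.minFinrankInf W A + ρ.minFinrankInf W B ≤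
      ρ.minFinrankInf W (A ⊔ B) + ρ.minFinrankInf W (A ⊓ B) := by
  obtain ⟨f₁, hf₁, hsup⟩ := ρ.exists_ne_zero_finrank_le_minFinrankInf W (A ⊔ B)
  obtain ⟨f₂, hf₂, hinf⟩ := ρ.exists_ne_zero_finrank_le_minFinrankInf W (A ⊓ B)
  obtain ⟨g, hg⟩ := Function.ne_iff.mp (Subtype.coe_ne_coe.mpr (mul_ne_zero hf₁ hf₂))
  obtain ⟨hg₁, hg₂⟩ := mul_ne_zero_iff.mp hg
  calc ρ.minFinrankInf W A + ρ.minFinrankInf W B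
      ≤ finrank k ↥(W.map (ρ g) ⊓ A) + finrank k ↥(W.map (ρ g) ⊓ B) :=
        add_le_add (ρ.minFinrankInf_le W A g) (ρ.minFinrankInf_le W B g)
    _ ≤ finrank k ↥(W.map (ρ g) ⊓ (A ⊔ B)) + finrank k ↥(W.map (ρ g) ⊓ (A ⊓ B)) :=
        finrank_inf_add_finrank_inf_le _ A B
    _ ≤ _ := add_le_add (hsup g hg₁) (hinf g hg₂)

theorem minFinrankInf_mul_finrank_le [NoZeroDivisors ρ.coeffAlgebra]
    (hirr : ∀ S : Submodule k V, (∀ g, S.map (ρ g) = S) → S = ⊥ ∨ S = ⊤) :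
    ρ.minFinrankInf W M * finrank k V ≤ finrank k W * finrank k M := by
  let ψ (U : Submodule k V) : ℤ :=
    ρ.minFinrankInf W U * finrank k V - finrank k W * finrank k U
  have hψ : ∀ A B, ψ A + ψ B ≤ ψ (A ⊔ B) + ψ (A ⊓ B) := fun A B => by
    have h₁ := ρ.minFinrankInf_add_minFinrankInf_le W A B
    have h₂ := Submodule.finrank_sup_add_finrank_inf_eq A B
    zify at h₁ h₂
    simp only [ψ]
    nlinarith [mul_le_mul_of_nonneg_right h₁ (Nat.cast_nonneg (α := ℤ) (finrank k V))]
  have hbdd : BddAbove (range ψ) := by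
    refine ⟨finrank k V * finrank k V, ?_⟩
    rintro _ ⟨U, rfl⟩
    have : ρ.minFinrankInf W U ≤ finrank k V :=
      (ρ.minFinrankInf_le W U 1).trans (Submodule.finrank_le _)
    simp only [ψ]
    nlinarith
  obtain ⟨N, hNmax, hNgreatest⟩ := exists_isGreatest_maximizers_of_supermodular ψ hψ hbdd
  have hinv : ∀ g, N.map (ρ g) = N := fun g => by
    refine Submodule.eq_of_le_of_finrank_eq (hNgreatest fun b => ?_) (ρ.finrank_map N g)
    simp only [ψ, Set.mem_ofPred_eq] at hNmax ⊢
    rw [minFinrankInf_map, finrank_map]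
    exact hNmax b
  have hN : ψ N = 0 := by
    rcases hirr N hinv with rfl | rfl
    · simp [ψ, minFinrankInf_bot]
    · simp [ψ, minFinrankInf_top, mul_comm]
  have := hNmax M
  simp only [ψ, hN] at this
  exact_mod_cast sub_nonpos.mp this

theorem exists_finrank_map_inf_mul_finrank_le [NoZeroDivisors ρ.coeffAlgebra]
    (hirr : ∀ S : Submodule k V, (∀ g, S.map (ρ g) = S) → S = ⊥ ∨ S = ⊤) :
    ∃ g, finrank k ↥(W.map (ρ g) ⊓ M) * finrank k V ≤ finrank k W * finrank k M := by
  obtain ⟨g, hg⟩ := ρ.exists_finrank_eq_minFinrankInf W M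
  exact ⟨g, hg ▸ ρ.minFinrankInf_mul_finrank_le W M hirr⟩

end Representation

theorem subcritical_intersection_single_general
    (V : Type*) [NormedAddCommGroup V] [NormedSpace ℝ V]
    [FiniteDimensional ℝ V]
    (H : Subgroup (V →L[ℝ] V)ˣ)
    (hconn : IsConnected (H : Set (V →L[ℝ] V)ˣ))
    (hirr : ∀ S : Submodule ℝ V,
      (∀ h ∈ H, S.map ((h : V →L[ℝ] V) : V →ₗ[ℝ] V) = S) → S = ⊥ ∨ S = ⊤)
    (W W' : Submodule ℝ V) :
    ∃ h ∈ H,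
      finrank ℝ ↥(W.map ((h : V →L[ℝ] V) : V →ₗ[ℝ] V) ⊓ W') * finrank ℝ V ≤
        finrank ℝ ↥W * finrank ℝ ↥W' := by
  let ρ : Representation ℝ H V := ContinuousLinearMap.toLinearMapRingHom.toMonoidHom.comp
    ((Units.coeHom _).comp H.subtype)
  have : ConnectedSpace H := isConnected_iff_connectedSpace.mp hconn
  have hcont : ∀ Λ : Dual ℝ (Module.End ℝ V), Continuous fun g => Λ (ρ g) := fun Λ =>
    (Λ ∘ₗ ContinuousLinearMap.coeLM ℝ).continuous_of_finiteDimensional.comp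
      (Units.continuous_val.comp continuous_subtype_val)
  have : NoZeroDivisors ρ.coeffAlgebra := noZeroDivisors_of_connectedSpace ρ.coeffAlgebra
    (fun _ => ρ.continuous_of_mem_coeffAlgebra hcont) (fun g _ => ρ.mul_left_mem_coeffAlgebra g)
  obtain ⟨⟨h, hh⟩, hle⟩ := ρ.exists_finrank_map_inf_mul_finrank_le W W'
    fun S hS => hirr S fun h hh => hS ⟨h, hh⟩
  exact ⟨h, hh, hle⟩

/-- Subcritical intersection bound for a single pair of subspaces:
if a norm-topology connected subgroup `H` of `GL(V)` acts irreducibly on the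
nonzero finite-dimensional real vector space `V`, then for all subspaces
`W, W'` there is `h ∈ H` with `dim((h·W) ∩ W') · dim V ≤ dim W · dim W'`. -/
theorem subcritical_intersection_single
    (V : Type*) [NormedAddCommGroup V] [NormedSpace ℝ V]
    [FiniteDimensional ℝ V] [Nontrivial V]
    (H : Subgroup (V →L[ℝ] V)ˣ)
    (hconn : IsConnected (H : Set (V →L[ℝ] V)ˣ))
    (hirr : ∀ S : Submodule ℝ V,
      (∀ h ∈ H, S.map ((h : V →L[ℝ] V) : V →ₗ[ℝ] V) = S) → S = ⊥ ∨ S = ⊤)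
    (W W' : Submodule ℝ V) :
    ∃ h ∈ H,
      finrank ℝ ↥(W.map ((h : V →L[ℝ] V) : V →ₗ[ℝ] V) ⊓ W') * finrank ℝ V ≤
        finrank ℝ ↥W * finrank ℝ ↥W' :=
  subcritical_intersection_single_general V H hconn hirr W W'
end

section
/- Let V be a finite-dimensional vector space over a field and let G be a group acting on V by linear automorphisms such that the only G-invariant linear subspaces of V are {0} and V. Then for all linear subspaces W, W' of V with {0} ≠ W ≠ V and {0} ≠ W' ≠ V, there exists g ∈ G such that dim((g·W) ∩ W') < min(dim W, dim W'). -/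
/-!
If the conclusion failed for every `g`, then, since all translates `g·W` have the dimension of
`W`, either every translate lies in `W'` (when `dim W ≤ dim W'`) or `W'` lies in every translate
(when `dim W' ≤ dim W`). In the first case the span of the translates is a nonzero invariant
subspace contained in `W' ≠ V`; in the second the intersection of the translates is an invariant
subspace contained in `W ≠ V` and containing `W' ≠ 0`. Both contradict irreducibility.
-/

open Module

section Translates

variable {R M G : Type*} [Semiring R] [AddCommMonoid M] [Module R M] [Group G]
  (ρ : G →* (M ≃ₗ[R] M)) (W : Submodule R M)

theorem map_map_representation_mul (g h : G) :
    (W.map (ρ h).toLinearMap).map (ρ g).toLinearMap = W.map (ρ (g * h)).toLinearMap := by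
  rw [← Submodule.map_comp, map_mul]
  rfl

theorem map_iSup_map_representation (g : G) :
    (⨆ h, W.map (ρ h).toLinearMap).map (ρ g).toLinearMap = ⨆ h, W.map (ρ h).toLinearMap := by
  rw [Submodule.map_iSup]
  simp only [map_map_representation_mul]
  exact (Equiv.mulLeft g).iSup_congr fun _ => rfl

theorem map_iInf_map_representation (g : G) :
    (⨅ h, W.map (ρ h).toLinearMap).map (ρ g).toLinearMap = ⨅ h, W.map (ρ h).toLinearMap := by
  rw [Submodule.map_iInf _ (ρ g).injective]
  simp only [map_map_representation_mul]
  exact (Equiv.mulLeft g).iInf_congr fun _ => rfl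

variable {ρ W}

theorem iSup_map_representation_eq_top
    (hirr : ∀ S : Submodule R M, (∀ g : G, S.map (ρ g).toLinearMap = S) → S = ⊥ ∨ S = ⊤)
    (hW : W ≠ ⊥) : ⨆ g, W.map (ρ g).toLinearMap = ⊤ := by
  refine (hirr _ (map_iSup_map_representation ρ W)).resolve_left fun h => hW ?_
  rw [eq_bot_iff, ← h]
  simpa using le_iSup (fun g => W.map (ρ g).toLinearMap) 1

theorem iInf_map_representation_eq_bot
    (hirr : ∀ S : Submodule R M, (∀ g : G, S.map (ρ g).toLinearMap = S) → S = ⊥ ∨ S = ⊤)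
    (hW : W ≠ ⊤) : ⨅ g, W.map (ρ g).toLinearMap = ⊥ := by
  refine (hirr _ (map_iInf_map_representation ρ W)).resolve_right fun h => hW ?_
  rw [eq_top_iff, ← h]
  simpa using iInf_le (fun g => W.map (ρ g).toLinearMap) 1

end Translates

theorem Submodule.le_of_finrank_le_finrank_inf {K V : Type*} [DivisionRing K] [AddCommGroup V]
    [Module K V] {A B : Submodule K V} [FiniteDimensional K A]
    (h : finrank K A ≤ finrank K ↥(A ⊓ B)) : A ≤ B :=
  inf_eq_left.mp (Submodule.eq_of_le_of_finrank_le inf_le_left h)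

/-- If a group `G` acts irreducibly by linear automorphisms on a
finite-dimensional vector space `V`, then for any proper nontrivial subspaces
`W, W'` some translate `g·W` meets `W'` in dimension strictly less than
`min(dim W, dim W')`. -/
theorem exists_translate_dim_inter_lt
    (K V G : Type*) [Field K] [AddCommGroup V] [Module K V]
    [FiniteDimensional K V] [Group G]
    (ρ : G →* (V ≃ₗ[K] V))
    (hirr : ∀ S : Submodule K V,
      (∀ g : G, S.map (ρ g).toLinearMap = S) → S = ⊥ ∨ S = ⊤)
    (W W' : Submodule K V)
    (hW0 : W ≠ ⊥) (hWt : W ≠ ⊤) (hW'0 : W' ≠ ⊥) (hW't : W' ≠ ⊤) :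
    ∃ g : G,
      finrank K ↥(W.map (ρ g).toLinearMap ⊓ W') <
        min (finrank K ↥W) (finrank K ↥W') := by
  by_contra! h
  have hdim (g : G) : finrank K ↥(W.map (ρ g).toLinearMap) = finrank K W :=
    LinearEquiv.finrank_map_eq (ρ g) W
  rcases le_total (finrank K W) (finrank K W') with hle | hle
  · have hsub (g : G) : W.map (ρ g).toLinearMap ≤ W' :=
      Submodule.le_of_finrank_le_finrank_inf (by simpa [hdim, hle] using h g)
    have hspan := iSup_map_representation_eq_top hirr hW0
    exact hW't (top_le_iff.mp (hspan ▸ iSup_le hsub))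
  · have hsub (g : G) : W' ≤ W.map (ρ g).toLinearMap :=
      Submodule.le_of_finrank_le_finrank_inf (by rw [inf_comm]; simpa [hle] using h g)
    have hcore := iInf_map_representation_eq_bot hirr hWt
    exact hW'0 (eq_bot_iff.mpr (hcore ▸ le_iInf hsub))
end

section
/- Let V be a finite-dimensional real inner product space, h : V → V an invertible linear map with adjoint h*, and W ⊆ V a linear subspace. Then there exists a linear isomorphism φ from W onto h*(W) such that for every v ∈ V one has φ(π_W(h(v))) = π_{h*(W)}(v), where π_U denotes the orthogonal projection of V onto a subspace U. -/
/-!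
Both `π_W ∘ h` and `π_{h*(W)}` are surjective, and they have the same kernel:
`v ⊥ h*(W)` iff `⟪h v, w⟫ = ⟪v, h* w⟫ = 0` for all `w ∈ W`, i.e. iff `h v ∈ Wᗮ`.
Two surjections with a common kernel factor through the same quotient, which yields `φ`.
-/

open Submodule LinearMap

namespace LinearEquiv

variable {R M N P : Type*} [Ring R] [AddCommGroup M] [AddCommGroup N] [AddCommGroup P]
  [Module R M] [Module R N] [Module R P]

noncomputable def ofSurjectiveOfKerEq (f : M →ₗ[R] N) (g : M →ₗ[R] P)
    (hf : Function.Surjective f) (hg : Function.Surjective g) (hker : ker f = ker g) :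
    N ≃ₗ[R] P :=
  (f.quotKerEquivOfSurjective hf).symm ≪≫ₗ quotEquivOfEq _ _ hker ≪≫ₗ
    g.quotKerEquivOfSurjective hg

@[simp]
theorem ofSurjectiveOfKerEq_apply (f : M →ₗ[R] N) (g : M →ₗ[R] P)
    (hf : Function.Surjective f) (hg : Function.Surjective g) (hker : ker f = ker g) (x : M) :
    ofSurjectiveOfKerEq f g hf hg hker (f x) = g x := by
  simp [ofSurjectiveOfKerEq]

end LinearEquiv

namespace Submodule

variable {𝕜 E F : Type*} [RCLike 𝕜] [NormedAddCommGroup E] [InnerProductSpace 𝕜 E]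
  [NormedAddCommGroup F] [InnerProductSpace 𝕜 F]

theorem orthogonalProjectionOnto_surjective (W : Submodule 𝕜 E) [W.HasOrthogonalProjection] :
    Function.Surjective W.orthogonalProjectionOnto := fun w ↦
  ⟨w, orthogonalProjectionOnto_mem_subspace_eq_self w⟩

variable [FiniteDimensional 𝕜 E] [FiniteDimensional 𝕜 F]

theorem orthogonal_map_adjoint (T : E →ₗ[𝕜] F) (W : Submodule 𝕜 F) :
    (W.map (adjoint T))ᗮ = Wᗮ.comap T := by
  ext v
  simp only [mem_comap, mem_orthogonal', mem_map, forall_exists_index, and_imp,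
    forall_apply_eq_imp_iff₂, adjoint_inner_right]

theorem ker_orthogonalProjectionOnto_comp (T : E →ₗ[𝕜] F) (W : Submodule 𝕜 F) :
    ker (W.orthogonalProjectionOnto.toLinearMap ∘ₗ T) = (W.map (adjoint T))ᗮ := by
  rw [ker_comp, orthogonal_map_adjoint, ker_orthogonalProjectionOnto]

end Submodule

/-- Equivalence of the two types of projections: for an invertible linear map
`h` on a finite-dimensional real inner product space and a subspace `W`, there
is a linear isomorphism `φ : W ≃ h*(W)` with `φ ∘ π_W ∘ h = π_{h*(W)}`. -/
theorem orthogonalProjection_comp_eq_adjoint_proj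
    (V : Type*) [NormedAddCommGroup V] [InnerProductSpace ℝ V]
    [FiniteDimensional ℝ V]
    (h : V →ₗ[ℝ] V) (hbij : Function.Bijective h) (W : Submodule ℝ V) :
    ∃ φ : ↥W ≃ₗ[ℝ] ↥(W.map (LinearMap.adjoint h)),
      ∀ v : V,
        φ (Submodule.orthogonalProjection W (h v)) =
          Submodule.orthogonalProjection (W.map (LinearMap.adjoint h)) v := by
  have hker : ker (W.orthogonalProjectionOnto.toLinearMap ∘ₗ h) =
      ker (W.map (adjoint h)).orthogonalProjectionOnto.toLinearMap := by
    rw [ker_orthogonalProjectionOnto_comp, ker_orthogonalProjectionOnto]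
  have hsurj : Function.Surjective (W.orthogonalProjectionOnto.toLinearMap ∘ₗ h) :=
    (orthogonalProjectionOnto_surjective W).comp hbij.surjective
  exact ⟨.ofSurjectiveOfKerEq _ _ hsurj (orthogonalProjectionOnto_surjective _) hker,
    LinearEquiv.ofSurjectiveOfKerEq_apply _ _ hsurj _ hker⟩
end

section
/- Let g be a Lie algebra over a field, h a Lie subalgebra of g, and r a linear subspace of g such that g = h ⊕ r as vector spaces and ⁅h, r⁆ ⊆ r. Suppose that r, regarded as an h-module via the bracket action, is nonzero, has no h-invariant linear subspaces other than {0} and r, and satisfies ⁅h, r⁆ ≠ {0}. Then every Lie ideal of g containing h is equal to g. -/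
/-!
Let `I` be a Lie ideal containing `h`. Then `r ⊓ I` is an `h`-invariant subspace of `r`, and it is
nonzero: if `⁅x, v⁆ ≠ 0` with `x ∈ h`, `v ∈ r`, this bracket lies in `r` by invariance and in `I`
because `x ∈ I`. Irreducibility forces `r ⊓ I = r`, so `I` contains both `h` and `r`, whose sum is `g`.
-/

namespace LieIdeal

variable {K g : Type*} [CommRing K] [LieRing g] [LieAlgebra K g]

lemma lie_mem_inf_toSubmodule {h : LieSubalgebra K g} {r : Submodule K g}
    (hbr : ∀ x ∈ h, ∀ v ∈ r, ⁅x, v⁆ ∈ r) (I : LieIdeal K g) :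
    ∀ x ∈ h, ∀ v ∈ r ⊓ I.toSubmodule, ⁅x, v⁆ ∈ r ⊓ I.toSubmodule :=
  fun x hx v hv => ⟨hbr x hx v hv.1, lie_mem_right K g I x v hv.2⟩

lemma inf_toSubmodule_ne_bot {h : LieSubalgebra K g} {r : Submodule K g}
    (hbr : ∀ x ∈ h, ∀ v ∈ r, ⁅x, v⁆ ∈ r) (hnontriv : ∃ x ∈ h, ∃ v ∈ r, ⁅x, v⁆ ≠ 0)
    {I : LieIdeal K g} (hI : ∀ x ∈ h, x ∈ I) : r ⊓ I.toSubmodule ≠ ⊥ := by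
  obtain ⟨x, hx, v, hv, hxv⟩ := hnontriv
  exact (Submodule.ne_bot_iff _).mpr
    ⟨⁅x, v⁆, ⟨hbr x hx v hv, lie_mem_left K g I x v (hI x hx)⟩, hxv⟩

lemma eq_top_of_isCompl {p q : Submodule K g} (hpq : IsCompl p q) {I : LieIdeal K g}
    (hp : p ≤ I.toSubmodule) (hq : q ≤ I.toSubmodule) : I = ⊤ := by
  rw [← LieSubmodule.toSubmodule_eq_top, eq_top_iff, ← hpq.sup_eq_top]
  exact sup_le hp hq

end LieIdeal

theorem lieIdeal_eq_top_of_le_general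
    (K : Type*) [Field K] (g : Type*) [LieRing g] [LieAlgebra K g]
    (h : LieSubalgebra K g) (r : Submodule K g)
    (hcompl : IsCompl h.toSubmodule r)
    (hbr : ∀ x ∈ h, ∀ v ∈ r, ⁅x, v⁆ ∈ r)
    (hirr : ∀ s : Submodule K g, s ≤ r →
      (∀ x ∈ h, ∀ v ∈ s, ⁅x, v⁆ ∈ s) → s = ⊥ ∨ s = r)
    (hnontriv : ∃ x ∈ h, ∃ v ∈ r, ⁅x, v⁆ ≠ 0)
    (I : LieIdeal K g) (hI : ∀ x ∈ h, x ∈ I) : I = ⊤ := by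
  have hinf : r ⊓ I.toSubmodule = r :=
    (hirr _ inf_le_left (I.lie_mem_inf_toSubmodule hbr)).resolve_left
      (LieIdeal.inf_toSubmodule_ne_bot hbr hnontriv hI)
  exact LieIdeal.eq_top_of_isCompl hcompl (fun x hx => hI x hx) (inf_eq_left.mp hinf)

/-- If `g = h ⊕ r` with `r` a nonzero irreducible nontrivial `h`-module
(under the bracket action), then every Lie ideal of `g` containing `h` is
all of `g`. -/
theorem lieIdeal_eq_top_of_le
    (K : Type*) [Field K] (g : Type*) [LieRing g] [LieAlgebra K g]
    (h : LieSubalgebra K g) (r : Submodule K g)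
    (hcompl : IsCompl h.toSubmodule r)
    (hbr : ∀ x ∈ h, ∀ v ∈ r, ⁅x, v⁆ ∈ r)
    (hr0 : r ≠ ⊥)
    (hirr : ∀ s : Submodule K g, s ≤ r →
      (∀ x ∈ h, ∀ v ∈ s, ⁅x, v⁆ ∈ s) → s = ⊥ ∨ s = r)
    (hnontriv : ∃ x ∈ h, ∃ v ∈ r, ⁅x, v⁆ ≠ 0)
    (I : LieIdeal K g) (hI : ∀ x ∈ h, x ∈ I) : I = ⊤ :=
  lieIdeal_eq_top_of_le_general K g h r hcompl hbr hirr hnontriv I hI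
end

section
/- Let F be a field, V₁ and V₂ nonzero finite-dimensional F-vector spaces, v₁ ∈ V₁ and v₂ ∈ V₂ nonzero vectors, and g₁ : V₁ → V₁, g₂ : V₂ → V₂ linear automorphisms. In V = V₁ ⊗ V₂ consider the subspaces W = V₁ ⊗ (F·v₂) and W' = (F·v₁) ⊗ V₂. Then ((g₁ ⊗ g₂)(W)) ∩ W' is exactly the one-dimensional subspace spanned by v₁ ⊗ g₂(v₂); in particular dim(((g₁ ⊗ g₂)(W)) ∩ W') · dim V = dim W · dim W'. -/
/-!
Contracting against a functional `f` with `f (g₂ v₂) = 1` recovers the left factor: if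
`x ⊗ g₂ v₂ = v₁ ⊗ y` then `x = f y • v₁`. Since `g₁ ⊗ g₂` maps `V₁ ⊗ v₂` onto `V₁ ⊗ g₂ v₂`,
the intersection is therefore the line through `v₁ ⊗ g₂ v₂`. The dimension count follows because
`x ↦ x ⊗ v₂` and `y ↦ v₁ ⊗ y` are injective, by the same contraction.
-/

open Module TensorProduct

namespace TensorProduct

section Field

variable {F M N : Type*} [Field F] [AddCommGroup M] [Module F M] [AddCommGroup N] [Module F N]

lemma exists_contraction_tmul {w : N} (hw : w ≠ 0) :
    ∃ φ : M ⊗[F] N →ₗ[F] M, ∃ f : Dual F N, f w = 1 ∧ ∀ x y, φ (x ⊗ₜ y) = f y • x := by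
  obtain ⟨f, hf⟩ := Projective.exists_dual_eq_one F hw
  exact ⟨(TensorProduct.rid F M).toLinearMap ∘ₗ f.lTensor M, f, hf, fun x y => by simp⟩

lemma mk_flip_injective {w : N} (hw : w ≠ 0) : Function.Injective ((mk F M N).flip w) := by
  obtain ⟨φ, f, hf, hφ⟩ := exists_contraction_tmul (F := F) (M := M) hw
  intro x x' h
  simpa [hφ, hf] using congrArg φ h

lemma mk_injective {v : M} (hv : v ≠ 0) : Function.Injective (mk F M N v) := by
  have hcomm : ⇑(mk F M N v) = TensorProduct.comm F N M ∘ (mk F N M).flip v := by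
    ext y; simp
  rw [hcomm]
  exact (TensorProduct.comm F N M).injective.comp (mk_flip_injective hv)

lemma mem_span_singleton_of_tmul_eq_tmul {w : N} (hw : w ≠ 0) {x v : M} {y : N}
    (h : x ⊗ₜ[F] w = v ⊗ₜ y) : x ∈ F ∙ v := by
  obtain ⟨φ, f, hf, hφ⟩ := exists_contraction_tmul (F := F) (M := M) hw
  have hx : x = f y • v := by simpa [hφ, hf] using congrArg φ h
  exact hx ▸ Submodule.smul_mem _ _ (Submodule.mem_span_singleton_self v)

lemma range_mk_flip_inf_range_mk {w : N} (hw : w ≠ 0) (v : M) :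
    LinearMap.range ((mk F M N).flip w) ⊓ LinearMap.range (mk F M N v) = F ∙ (v ⊗ₜ w) := by
  apply le_antisymm
  · rintro _ ⟨⟨x, rfl⟩, y, hy⟩
    obtain ⟨c, rfl⟩ := Submodule.mem_span_singleton.mp
      (mem_span_singleton_of_tmul_eq_tmul hw hy.symm)
    rw [map_smul]
    exact Submodule.smul_mem _ c (Submodule.mem_span_singleton_self _)
  · rw [Submodule.span_le, Set.singleton_subset_iff]
    exact ⟨⟨v, rfl⟩, w, rfl⟩

end Field

lemma map_range_mk_flip {R M N M' N' : Type*} [CommSemiring R]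
    [AddCommMonoid M] [Module R M] [AddCommMonoid N] [Module R N]
    [AddCommMonoid M'] [Module R M'] [AddCommMonoid N'] [Module R N']
    {g : M →ₗ[R] M'} (hg : Function.Surjective g) (h : N →ₗ[R] N') (w : N) :
    (LinearMap.range ((mk R M N).flip w)).map (map g h) =
      LinearMap.range ((mk R M' N').flip (h w)) := by
  have hcomp : map g h ∘ₗ (mk R M N).flip w = (mk R M' N').flip (h w) ∘ₗ g := by
    ext x; simp
  rw [← LinearMap.range_comp, hcomp, LinearMap.range_comp_of_range_eq_top _
    (LinearMap.range_eq_top.mpr hg)]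

end TensorProduct

theorem tensor_intersection_optimal_general
    (F : Type*) [Field F]
    (V₁ V₂ : Type*) [AddCommGroup V₁] [Module F V₁]
    [AddCommGroup V₂] [Module F V₂]
    (v₁ : V₁) (hv₁ : v₁ ≠ 0) (v₂ : V₂) (hv₂ : v₂ ≠ 0)
    (g₁ : V₁ ≃ₗ[F] V₁) (g₂ : V₂ ≃ₗ[F] V₂)
    (W W' : Submodule F (V₁ ⊗[F] V₂))
    (hW : W = LinearMap.range ((TensorProduct.mk F V₁ V₂).flip v₂))
    (hW' : W' = LinearMap.range (TensorProduct.mk F V₁ V₂ v₁)) :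
    W.map (TensorProduct.map g₁.toLinearMap g₂.toLinearMap) ⊓ W' =
        Submodule.span F {v₁ ⊗ₜ[F] g₂ v₂} ∧
      finrank F ↥(Submodule.span F {v₁ ⊗ₜ[F] g₂ v₂}) = 1 ∧
      finrank F ↥(W.map (TensorProduct.map g₁.toLinearMap g₂.toLinearMap) ⊓ W') *
          finrank F (V₁ ⊗[F] V₂) =
        finrank F ↥W * finrank F ↥W' := by
  subst hW hW'
  have hw : g₂ v₂ ≠ 0 := g₂.map_ne_zero_iff.mpr hv₂
  have hline : (LinearMap.range ((mk F V₁ V₂).flip v₂)).map (map g₁.toLinearMap g₂.toLinearMap) ⊓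
      LinearMap.range (mk F V₁ V₂ v₁) = F ∙ (v₁ ⊗ₜ g₂ v₂) := by
    rw [map_range_mk_flip g₁.surjective, LinearEquiv.coe_coe, range_mk_flip_inf_range_mk hw]
  have hrank : finrank F (F ∙ (v₁ ⊗ₜ[F] g₂ v₂)) = 1 :=
    finrank_span_singleton ((map_ne_zero_iff _ (mk_injective hv₁)).mpr hw)
  refine ⟨hline, hrank, ?_⟩
  rw [hline, hrank, LinearMap.finrank_range_of_inj (mk_flip_injective hv₂),
    LinearMap.finrank_range_of_inj (mk_injective hv₁), finrank_tensorProduct, one_mul]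

/-- Optimality of the subcritical dimension bound: with
`W = V₁ ⊗ (F·v₂)` and `W' = (F·v₁) ⊗ V₂` inside `V = V₁ ⊗ V₂`, the
intersection `((g₁ ⊗ g₂)(W)) ∩ W'` is exactly the line spanned by
`v₁ ⊗ g₂(v₂)`, and the bound `dim(h·W ∩ W')·dim V = dim W · dim W'`
holds with equality. -/
theorem tensor_intersection_optimal
    (F : Type*) [Field F]
    (V₁ V₂ : Type*) [AddCommGroup V₁] [Module F V₁]
    [AddCommGroup V₂] [Module F V₂]
    [FiniteDimensional F V₁] [FiniteDimensional F V₂]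
    (v₁ : V₁) (hv₁ : v₁ ≠ 0) (v₂ : V₂) (hv₂ : v₂ ≠ 0)
    (g₁ : V₁ ≃ₗ[F] V₁) (g₂ : V₂ ≃ₗ[F] V₂)
    (W W' : Submodule F (V₁ ⊗[F] V₂))
    (hW : W = LinearMap.range ((TensorProduct.mk F V₁ V₂).flip v₂))
    (hW' : W' = LinearMap.range (TensorProduct.mk F V₁ V₂ v₁)) :
    W.map (TensorProduct.map g₁.toLinearMap g₂.toLinearMap) ⊓ W' =
        Submodule.span F {v₁ ⊗ₜ[F] g₂ v₂} ∧
      finrank F ↥(Submodule.span F {v₁ ⊗ₜ[F] g₂ v₂}) = 1 ∧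
      finrank F ↥(W.map (TensorProduct.map g₁.toLinearMap g₂.toLinearMap) ⊓ W') *
          finrank F (V₁ ⊗[F] V₂) =
        finrank F ↥W * finrank F ↥W' :=
  tensor_intersection_optimal_general F V₁ V₂ v₁ hv₁ v₂ hv₂ g₁ g₂ W W' hW hW'
end

section
/- Let g be a finite-dimensional semisimple real Lie algebra, h a Lie subalgebra of g that is semisimple as a Lie algebra, and r a linear subspace of g with g = h ⊕ r as vector spaces and ⁅h, r⁆ ⊆ r, such that r is nonzero and has no h-invariant linear subspaces other than {0} and r. Let a ∈ h be an element such that the only Lie ideal of h containing a is h itself. Then the only Lie ideal of g containing a is g itself. -/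
/-!
Pulling a Lie ideal `J ∋ a` of `g` back to `h` gives an ideal containing `a`, so `h ≤ J`.
Then `J ⊓ r` is `h`-invariant, hence `⊥` or `r`. If it is `r`, then `J ⊇ h ⊔ r = g`. If it is `⊥`,
then `⁅h, r⁆ ⊆ J ⊓ r = 0`, so every subspace of `r` is invariant and `r` is a line; a line that
commutes with `h` and with itself is central, contradicting semisimplicity of `g`.
-/

section

variable {R L : Type*} [CommRing R] [LieRing L] [LieAlgebra R L]

theorem LieSubalgebra.toSubmodule_le_of_mem_lieIdeal (H : LieSubalgebra R L) {a : L} (ha : a ∈ H)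
    (haI : ∀ I : LieIdeal R H, (⟨a, ha⟩ : H) ∈ I → I = ⊤) {J : LieIdeal R L} (haJ : a ∈ J) :
    H.toSubmodule ≤ J.toSubmodule := by
  intro x hx
  have hx' : (⟨x, hx⟩ : H) ∈ J.comap H.incl := by
    rw [haI (J.comap H.incl) haJ]
    trivial
  exact hx'

theorem Submodule.eq_span_singleton_of_forall_eq_bot_or_eq {r : Submodule R L}
    (hr : ∀ s : Submodule R L, s ≤ r → s = ⊥ ∨ s = r) {v : L} (hvr : v ∈ r) (hv0 : v ≠ 0) :
    span R {v} = r :=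
  (hr _ ((span_singleton_le_iff_mem v r).mpr hvr)).resolve_left
    (fun h ↦ hv0 (span_singleton_eq_bot.mp h))

theorem LieAlgebra.mem_center_of_lie_eq_zero_of_eq_span_singleton {H : LieSubalgebra R L}
    {r : Submodule R L} (hHr : Codisjoint H.toSubmodule r) {v : L}
    (hHv : ∀ x ∈ H, ⁅x, v⁆ = 0) (hr : Submodule.span R {v} = r) :
    v ∈ center R L := by
  rw [LieModule.mem_maxTrivSubmodule]
  intro z
  obtain ⟨x, hx, w, hw, rfl⟩ := Submodule.mem_sup.mp (hHr.eq_top ▸ Submodule.mem_top (x := z))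
  obtain ⟨c, rfl⟩ := Submodule.mem_span_singleton.mp (hr ▸ hw)
  rw [add_lie, hHv x hx, smul_lie, lie_self, smul_zero, zero_add]

end

theorem lieIdeal_eq_top_of_mem_general
    (g : Type*) [LieRing g] [LieAlgebra ℝ g]
    [LieAlgebra.IsSemisimple ℝ g]
    (h : LieSubalgebra ℝ g)
    (r : Submodule ℝ g)
    (hcompl : IsCompl h.toSubmodule r)
    (hbr : ∀ x ∈ h, ∀ v ∈ r, ⁅x, v⁆ ∈ r)
    (hr0 : r ≠ ⊥)
    (hirr : ∀ s : Submodule ℝ g, s ≤ r →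
      (∀ x ∈ h, ∀ v ∈ s, ⁅x, v⁆ ∈ s) → s = ⊥ ∨ s = r)
    (a : g) (ha : a ∈ h)
    (haI : ∀ I : LieIdeal ℝ ↥h, (⟨a, ha⟩ : ↥h) ∈ I → I = ⊤) :
    ∀ J : LieIdeal ℝ g, a ∈ J → J = ⊤ := by
  intro J haJ
  have hhJ := h.toSubmodule_le_of_mem_lieIdeal ha haI haJ
  rcases hirr (J.toSubmodule ⊓ r) inf_le_right
      (fun x hx v hv ↦ ⟨J.lie_mem hv.1, hbr x hx v hv.2⟩) with hbot | htop
  · have htriv : ∀ x ∈ h, ∀ v ∈ r, ⁅x, v⁆ = 0 := fun x hx v hv ↦ by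
      have hxv : ⁅x, v⁆ ∈ J.toSubmodule ⊓ r := ⟨lie_mem_left ℝ g J x v (hhJ hx), hbr x hx v hv⟩
      rwa [hbot, Submodule.mem_bot] at hxv
    obtain ⟨v, hvr, hv0⟩ := (Submodule.ne_bot_iff r).mp hr0
    have hspan := Submodule.eq_span_singleton_of_forall_eq_bot_or_eq
      (fun s hs ↦ hirr s hs fun x hx w hw ↦ by rw [htriv x hx w (hs hw)]; exact s.zero_mem)
      hvr hv0
    have hvc := LieAlgebra.mem_center_of_lie_eq_zero_of_eq_span_singleton hcompl.codisjoint
      (fun x hx ↦ htriv x hx v hvr) hspan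
    rw [LieAlgebra.center_eq_bot, LieSubmodule.mem_bot] at hvc
    exact absurd hvc hv0
  · rw [← LieSubmodule.toSubmodule_eq_top, eq_top_iff, ← hcompl.codisjoint.eq_top]
    exact sup_le hhJ (htop ▸ inf_le_left)

/-- If `g` is a finite-dimensional semisimple real Lie algebra, `h ≤ g` a
semisimple subalgebra with `g = h ⊕ r` where `r` is a nonzero irreducible
`h`-module, and `a ∈ h` is contained in no proper Lie ideal of `h`, then `a`
is contained in no proper Lie ideal of `g`. -/
theorem lieIdeal_eq_top_of_mem
    (g : Type*) [LieRing g] [LieAlgebra ℝ g] [FiniteDimensional ℝ g]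
    [LieAlgebra.IsSemisimple ℝ g]
    (h : LieSubalgebra ℝ g) [LieAlgebra.IsSemisimple ℝ ↥h]
    (r : Submodule ℝ g)
    (hcompl : IsCompl h.toSubmodule r)
    (hbr : ∀ x ∈ h, ∀ v ∈ r, ⁅x, v⁆ ∈ r)
    (hr0 : r ≠ ⊥)
    (hirr : ∀ s : Submodule ℝ g, s ≤ r →
      (∀ x ∈ h, ∀ v ∈ s, ⁅x, v⁆ ∈ s) → s = ⊥ ∨ s = r)
    (a : g) (ha : a ∈ h)
    (haI : ∀ I : LieIdeal ℝ ↥h, (⟨a, ha⟩ : ↥h) ∈ I → I = ⊤) :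
    ∀ J : LieIdeal ℝ g, a ∈ J → J = ⊤ :=
  lieIdeal_eq_top_of_mem_general g h r hcompl hbr hr0 hirr a ha haI
end

section
/- For all positive integers d and k there exists a constant C > 0, depending only on d and k, such that for every nonzero polynomial P ∈ ℝ[x₁, …, x_d] of total degree at most k, every ball B ⊂ ℝ^d of positive radius, and every ε > 0, the Lebesgue measure of {x ∈ B : |P(x)| < ε} is at most C · (ε / sup_{x∈B} |P(x)|)^{1/(dk)} · Leb(B). -/
/-!
In one variable, let `E = {t ∈ [a, b] | |q t| < ε}` have measure `m`. Levels of the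
`1`-Lipschitz function `t ↦ |E ∩ (-∞, t]|` give `k + 1` points of `closure E` that are
`m / (k + 1)`-separated, and Lagrange interpolation at them bounds `|q|` on `[a, b]` by
`(k + 1) ε ((k + 1)(b - a) / m) ^ k`; comparing with `M ≤ |q t₀|` gives
`m ≤ (k + 1)² (ε / M) ^ (1 / k) (b - a)`.

In `d + 1` variables one works on boxes by induction on `d`, using Fubini in the first
coordinate. Let `|P z| ≥ M` and `t₀ = z 0`. The `y` with `|P (t₀, y)| < η` form a set of
measure `≲ (η / M) ^ (1 / (d k))` by induction; for every other `y` the one-variable bound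
applies to `t ↦ P (t, y)` with `M` replaced by `η`, giving `≲ (ε / η) ^ (1 / k)`. The choice
`η = M (ε / M) ^ (d / (d + 1))` makes both exponents of `ε / M` equal to `1 / ((d + 1) k)`.

A Euclidean ball lies in the cube with the same centre and radius, whose volume is a fixed
multiple of that of the ball. The supremum of `|P|` over the ball is attained, and it is
positive because a nonzero polynomial does not vanish on an open set.
-/

open MeasureTheory Set

open scoped ENNReal

section NodeSelection

variable {E : Set ℝ}

lemma toReal_volume_inter_Iic_le_add (hE : volume E ≠ ∞) (s t : ℝ) :
    (volume (E ∩ Iic t)).toReal ≤ (volume (E ∩ Iic s)).toReal + dist t s := by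
  have hsub : E ∩ Iic t ⊆ (E ∩ Iic s) ∪ Ioc s t := fun x ⟨hxE, hxt⟩ ↦
    (le_or_gt x s).imp (fun hxs ↦ ⟨hxE, hxs⟩) fun hsx ↦ ⟨hsx, hxt⟩
  have hle : volume (E ∩ Iic t) ≤ volume (E ∩ Iic s) + ENNReal.ofReal (t - s) :=
    (measure_mono hsub).trans ((measure_union_le _ _).trans_eq (by rw [Real.volume_Ioc]))
  have hfin : volume (E ∩ Iic s) ≠ ∞ := measure_ne_top_of_subset inter_subset_left hE
  calc (volume (E ∩ Iic t)).toReal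
      ≤ (volume (E ∩ Iic s) + ENNReal.ofReal (t - s)).toReal :=
        ENNReal.toReal_mono (by finiteness) hle
    _ ≤ (volume (E ∩ Iic s)).toReal + dist t s := by
        rw [ENNReal.toReal_add hfin ENNReal.ofReal_ne_top, Real.dist_eq]
        gcongr
        rw [ENNReal.toReal_ofReal']
        exact max_le (le_abs_self _) (abs_nonneg _)

lemma lipschitzWith_toReal_volume_inter_Iic (hE : volume E ≠ ∞) :
    LipschitzWith 1 fun t ↦ (volume (E ∩ Iic t)).toReal :=
  LipschitzWith.of_le_add fun t s ↦ toReal_volume_inter_Iic_le_add hE s t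

lemma exists_mem_closure_toReal_volume_inter_Iic_eq {a b : ℝ} (hEab : E ⊆ Icc a b) {s : ℝ}
    (hs : s ∈ Ioc 0 (volume E).toReal) :
    ∃ x ∈ closure E, (volume (E ∩ Iic x)).toReal = s := by
  have hE : volume E ≠ ∞ := measure_ne_top_of_subset hEab (by simp)
  have hab : a ≤ b := by
    by_contra! hba
    simp [eq_empty_of_subset_empty (hEab.trans (Icc_eq_empty_of_lt hba).le)] at hs
  have hFa : volume (E ∩ Iic a) = 0 :=
    measure_mono_null (fun x ⟨hxE, hxa⟩ ↦ le_antisymm hxa (hEab hxE).1) (measure_singleton a)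
  have hFb : E ∩ Iic b = E := inter_eq_left.mpr fun x hx ↦ (hEab hx).2
  obtain ⟨c, -, hFc⟩ : ∃ c ∈ Icc a b, (volume (E ∩ Iic c)).toReal = s :=
    intermediate_value_Icc hab (lipschitzWith_toReal_volume_inter_Iic hE).continuous.continuousOn
      (by simpa [hFa, hFb] using Ioc_subset_Icc_self hs)
  -- the point is the right end of `E ∩ Iic c`, a set of measure `s > 0`
  set S := E ∩ Iic c
  have hS : S.Nonempty :=
    nonempty_of_measure_ne_zero fun h ↦ hs.1.ne' (by rw [← hFc, h]; rfl)
  have hSbdd : BddAbove S := ⟨c, fun _ hx ↦ hx.2⟩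
  have hmono {u v : ℝ} (huv : u ≤ v) :
      (volume (E ∩ Iic u)).toReal ≤ (volume (E ∩ Iic v)).toReal :=
    ENNReal.toReal_mono (measure_ne_top_of_subset inter_subset_left hE)
      (measure_mono (inter_subset_inter_right _ (Iic_subset_Iic.mpr huv)))
  refine ⟨sSup S, closure_mono inter_subset_left (csSup_mem_closure hS hSbdd), le_antisymm ?_ ?_⟩
  · exact hFc ▸ hmono (csSup_le hS fun _ hx ↦ hx.2)
  · exact hFc ▸ ENNReal.toReal_mono (measure_ne_top_of_subset inter_subset_left hE)
      (measure_mono fun x hx ↦ ⟨hx.1, le_csSup hSbdd hx⟩)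

/-- The `x i` are points where the `1`-Lipschitz function `t ↦ volume (E ∩ Iic t)` takes the
values `δ, 2δ, …, (n + 1)δ`, with `(n + 1)δ = volume E`. -/
lemma exists_separated_mem_closure {a b : ℝ} (hEab : E ⊆ Icc a b) (hE : 0 < (volume E).toReal)
    (n : ℕ) : ∃ x : Fin (n + 1) → ℝ, (∀ i, x i ∈ closure E) ∧
      ∀ i j, i ≠ j → (volume E).toReal / (n + 1) ≤ |x i - x j| := by
  set δ := (volume E).toReal / (n + 1)
  have hδ : 0 < δ := by positivity
  have hlevel (j : Fin (n + 1)) : ((j : ℕ) + 1 : ℝ) * δ ∈ Ioc 0 (volume E).toReal := by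
    refine ⟨by positivity, ?_⟩
    calc ((j : ℕ) + 1 : ℝ) * δ ≤ (n + 1) * δ := by gcongr; exact_mod_cast j.is_le
      _ = (volume E).toReal := mul_div_cancel₀ _ (by positivity)
  choose x hxE hxF using fun j ↦ exists_mem_closure_toReal_volume_inter_Iic_eq hEab (hlevel j)
  refine ⟨x, hxE, fun i j hij ↦ ?_⟩
  have hlip := (lipschitzWith_toReal_volume_inter_Iic
    (measure_ne_top_of_subset hEab (by simp))).dist_le_mul (x i) (x j)
  have hij' : (1 : ℝ) ≤ |((i : ℕ) : ℝ) - (j : ℕ)| := by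
    have := Int.one_le_abs (sub_ne_zero.mpr (Nat.cast_injective.ne (Fin.val_ne_of_ne hij)))
    exact_mod_cast this
  calc δ ≤ |((i : ℕ) : ℝ) - (j : ℕ)| * δ := le_mul_of_one_le_left hδ.le hij'
    _ = dist (((i : ℕ) + 1 : ℝ) * δ) (((j : ℕ) + 1 : ℝ) * δ) := by
        rw [Real.dist_eq, ← sub_mul, abs_mul, abs_of_pos hδ]; ring_nf
    _ ≤ |x i - x j| := by simpa [hxF, Real.dist_eq] using hlip

end NodeSelection

lemma le_mul_rpow_of_mul_pow_le {k : ℕ} (hk : 0 < k) {m M ε L : ℝ} (hm : 0 ≤ m) (hM : 0 < M)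
    (hε : 0 ≤ ε) (hL : 0 ≤ L) (h : M * m ^ k ≤ (k + 1) ^ (k + 1) * ε * L ^ k) :
    m ≤ (k + 1) ^ 2 * (ε / M) ^ (1 / k : ℝ) * L := by
  refine (pow_le_pow_iff_left₀ hm (by positivity) hk.ne').mp ?_
  rw [mul_pow, mul_pow, ← Real.rpow_natCast ((ε / M) ^ _), ← Real.rpow_mul (by positivity),
    one_div_mul_cancel (by positivity), Real.rpow_one, ← pow_mul]
  calc m ^ k ≤ (k + 1) ^ (k + 1) * (ε / M) * L ^ k := by
        rw [mul_div_assoc', div_mul_eq_mul_div, le_div_iff₀ hM]; linarith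
    _ ≤ (k + 1) ^ (2 * k) * (ε / M) * L ^ k := by
        gcongr
        · linarith
        · omega

section OneVariable

open Polynomial

lemma Lagrange.abs_eval_basis_le {ι : Type*} [DecidableEq ι] {s : Finset ι} {x : ι → ℝ} {i : ι}
    {δ R t : ℝ} (hδ : 0 < δ) (hsep : ∀ j ∈ s, j ≠ i → δ ≤ |x i - x j|)
    (ht : ∀ j ∈ s, |t - x j| ≤ R) :
    |(Lagrange.basis s x i).eval t| ≤ (R / δ) ^ (s.erase i).card := by
  rw [Lagrange.basis, eval_prod, Finset.abs_prod, ← Finset.prod_const]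
  refine Finset.prod_le_prod (fun _ _ ↦ abs_nonneg _) fun j hj ↦ ?_
  obtain ⟨hji, hjs⟩ := Finset.mem_erase.mp hj
  rw [Lagrange.basisDivisor, eval_mul, eval_C, eval_sub, eval_X, eval_C, abs_mul, abs_inv,
    inv_mul_eq_div]
  exact div_le_div₀ ((abs_nonneg _).trans (ht j hjs)) (ht j hjs) hδ (hsep j hjs hji)

lemma Polynomial.abs_eval_le_of_separated_nodes {k : ℕ} {q : ℝ[X]} (hq : q.natDegree ≤ k)
    {x : Fin (k + 1) → ℝ} {δ R ε t : ℝ} (hδ : 0 < δ) (hsep : ∀ i j, i ≠ j → δ ≤ |x i - x j|)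
    (ht : ∀ i, |t - x i| ≤ R) (hqx : ∀ i, |q.eval (x i)| ≤ ε) :
    |q.eval t| ≤ (k + 1) * ε * (R / δ) ^ k := by
  have hinj : Set.InjOn x (Finset.univ : Finset (Fin (k + 1))) := fun i _ j _ hij ↦ by
    by_contra hne
    simpa [hij] using (hsep i j hne).trans_lt' hδ
  have hdeg : q.degree < (Finset.univ : Finset (Fin (k + 1))).card := by
    rw [Finset.card_univ, Fintype.card_fin]
    exact (degree_le_natDegree.trans (WithBot.coe_le_coe.mpr hq)).trans_lt
      (WithBot.coe_lt_coe.mpr k.lt_succ_self)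
  rw [Lagrange.eq_interpolate hinj hdeg, Lagrange.interpolate_apply, eval_finsetSum]
  calc |∑ i, (C (q.eval (x i)) * Lagrange.basis Finset.univ x i).eval t|
      ≤ ∑ _i : Fin (k + 1), ε * (R / δ) ^ k := by
        refine (Finset.abs_sum_le_sum_abs _ _).trans (Finset.sum_le_sum fun i _ ↦ ?_)
        rw [eval_mul, eval_C, abs_mul]
        have hbasis := Lagrange.abs_eval_basis_le (s := Finset.univ) (i := i) hδ
          (fun j _ hji ↦ hsep i j hji.symm) fun j _ ↦ ht j
        rw [Finset.card_erase_of_mem (Finset.mem_univ i), Finset.card_univ, Fintype.card_fin,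
          Nat.add_sub_cancel] at hbasis
        exact mul_le_mul (hqx i) hbasis (abs_nonneg _) ((abs_nonneg _).trans (hqx i))
    _ = (k + 1) * ε * (R / δ) ^ k := by
        rw [Finset.sum_const, Finset.card_univ, Fintype.card_fin, nsmul_eq_mul]
        push_cast
        ring

theorem volume_sublevel_Icc_le {k : ℕ} (hk : 0 < k) {q : ℝ[X]} (hq : q.natDegree ≤ k)
    {a b t₀ M ε : ℝ} (ht₀ : t₀ ∈ Icc a b) (hM : 0 < M) (hMt₀ : M ≤ |q.eval t₀|) (hε : 0 < ε) :
    volume {t ∈ Icc a b | |q.eval t| < ε} ≤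
      ENNReal.ofReal ((k + 1) ^ 2 * (ε / M) ^ (1 / k : ℝ) * (b - a)) := by
  set E := {t ∈ Icc a b | |q.eval t| < ε}
  have hL : 0 ≤ b - a := by linarith [ht₀.1, ht₀.2]
  have hEab : E ⊆ Icc a b := sep_subset _ _
  rw [← ENNReal.ofReal_toReal (measure_ne_top_of_subset hEab (by simp))]
  refine ENNReal.ofReal_le_ofReal ?_
  rcases (ENNReal.toReal_nonneg : 0 ≤ (volume E).toReal).eq_or_lt with hm | hm
  · rw [← hm]; positivity
  obtain ⟨x, hxE, hsep⟩ := exists_separated_mem_closure hEab hm k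
  have hcl : closure E ⊆ {t | t ∈ Icc a b ∧ |q.eval t| ≤ ε} :=
    closure_minimal (fun t ht ↦ ⟨ht.1, ht.2.le⟩)
      (isClosed_Icc.inter (isClosed_le (continuous_abs.comp q.continuous) continuous_const))
  have h := hMt₀.trans (abs_eval_le_of_separated_nodes (R := b - a) hq (by positivity) hsep
    (fun i ↦ abs_sub_le_iff.mpr ⟨by linarith [ht₀.2, (hcl (hxE i)).1.1],
      by linarith [ht₀.1, (hcl (hxE i)).1.2]⟩) fun i ↦ (hcl (hxE i)).2)
  generalize (volume E).toReal = m at hm h ⊢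
  refine le_mul_rpow_of_mul_pow_le hk hm.le hM hε.le hL ?_
  calc M * m ^ k ≤ (k + 1) * ε * ((b - a) / (m / (k + 1))) ^ k * m ^ k := by gcongr
    _ = (k + 1) ^ (k + 1) * ε * (b - a) ^ k := by
        rw [div_div_eq_mul_div, div_pow, mul_pow]; field_simp; ring

end OneVariable

open MvPolynomial

lemma Fin.cons_mem_Icc_iff {n : ℕ} {t : ℝ} {y : Fin n → ℝ} {a b : Fin (n + 1) → ℝ} :
    (Fin.cons t y : Fin (n + 1) → ℝ) ∈ Icc a b ↔
      t ∈ Icc (a 0) (b 0) ∧ y ∈ Icc (Fin.tail a) (Fin.tail b) := by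
  rw [← Fin.insertNth_zero', Fin.insertNth_mem_Icc]
  rfl

lemma volume_Icc_pi_succ {n : ℕ} (a b : Fin (n + 1) → ℝ) :
    volume (Icc a b) = ENNReal.ofReal (b 0 - a 0) * volume (Icc (Fin.tail a) (Fin.tail b)) := by
  simp only [Real.volume_Icc_pi, Fin.prod_univ_succ, Fin.tail]

lemma volume_eq_lintegral_volume_cons {n : ℕ} {A : Set (Fin (n + 1) → ℝ)}
    (hA : MeasurableSet A) : volume A = ∫⁻ y, volume {t : ℝ | Fin.cons t y ∈ A} := by
  have hmp := (volume_preserving_piFinSuccAbove (fun _ : Fin (n + 1) ↦ ℝ) 0).symm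
  rw [← hmp.measure_preimage_equiv, Measure.volume_eq_prod,
    Measure.prod_apply_symm (hmp.measurable hA)]
  congr! 3 with y
  simp only [MeasurableEquiv.piFinSuccAbove, Fin.insertNthEquiv, Fin.insertNth_zero']
  rfl

lemma MvPolynomial.measurableSet_sublevel_Icc {ι : Type*} [Fintype ι] (P : MvPolynomial ι ℝ)
    (a b : ι → ℝ) (ε : ℝ) : MeasurableSet {x ∈ Icc a b | |eval x P| < ε} :=
  measurableSet_Icc.inter
    (measurableSet_lt (continuous_abs.comp (continuous_eval P)).measurable measurable_const)

lemma MvPolynomial.eval_eval_C_finSuccEquiv {R : Type*} [CommSemiring R] {n : ℕ}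
    (P : MvPolynomial (Fin (n + 1)) R) (t : R) (y : Fin n → R) :
    eval y ((finSuccEquiv R n P).eval (C t)) = eval (Fin.cons t y) P := by
  rw [eval_polynomial_eval_finSuccEquiv, eval_C]
  rfl

lemma MvPolynomial.totalDegree_eval_C_finSuccEquiv_le {R : Type*} [CommSemiring R] {n : ℕ}
    (P : MvPolynomial (Fin (n + 1)) R) (t : R) :
    ((finSuccEquiv R n P).eval (C t)).totalDegree ≤ P.totalDegree := by
  rw [Polynomial.eval_eq_sum, Polynomial.sum_def]
  refine (totalDegree_finsetSum _ _).trans (Finset.sup_le fun j hj ↦ ?_)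
  refine (totalDegree_mul _ _).trans ?_
  rw [← map_pow, totalDegree_C, add_zero]
  exact le_self_add.trans
    (totalDegree_coeff_finSuccEquiv_add_le P j (Polynomial.mem_support_iff.mp hj))

lemma MvPolynomial.natDegree_map_eval_finSuccEquiv_le {R : Type*} [CommSemiring R] {n : ℕ}
    (P : MvPolynomial (Fin (n + 1)) R) (y : Fin n → R) :
    ((finSuccEquiv R n P).map (eval y)).natDegree ≤ P.totalDegree :=
  Polynomial.natDegree_map_le.trans
    ((natDegree_finSuccEquiv P).trans_le (degreeOf_le_totalDegree P 0))

theorem volume_sublevel_Icc_pi_succ_le {d k : ℕ} (hk : 0 < k) {P : MvPolynomial (Fin (d + 1)) ℝ}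
    (hP : P.totalDegree ≤ k) {a b : Fin (d + 1) → ℝ} {t₀ ε η : ℝ} (ht₀ : t₀ ∈ Icc (a 0) (b 0))
    (hε : 0 < ε) (hη : 0 < η) :
    volume {x ∈ Icc a b | |eval x P| < ε} ≤
      volume {y ∈ Icc (Fin.tail a) (Fin.tail b) | |eval (Fin.cons t₀ y) P| < η} *
          ENNReal.ofReal (b 0 - a 0) +
        ENNReal.ofReal ((k + 1) ^ 2 * (ε / η) ^ (1 / k : ℝ) * (b 0 - a 0)) *
          volume (Icc (Fin.tail a) (Fin.tail b)) := by
  set A := {x ∈ Icc a b | |eval x P| < ε}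
  set Q := Icc (Fin.tail a) (Fin.tail b)
  set Z := {y ∈ Q | |eval (Fin.cons t₀ y) P| < η}
  have hZ : MeasurableSet Z := by
    simpa only [Z, ← eval_eval_C_finSuccEquiv] using measurableSet_sublevel_Icc _ _ _ η
  have hslice (y : Fin d → ℝ) : volume {t : ℝ | Fin.cons t y ∈ A} ≤
      Z.indicator (fun _ ↦ ENNReal.ofReal (b 0 - a 0)) y +
        Q.indicator
          (fun _ ↦ ENNReal.ofReal ((k + 1) ^ 2 * (ε / η) ^ (1 / k : ℝ) * (b 0 - a 0))) y := by
    by_cases hyQ : y ∈ Q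
    swap
    · have hempty : {t : ℝ | Fin.cons t y ∈ A} = ∅ :=
        eq_empty_of_forall_notMem fun t ht ↦ hyQ (Fin.cons_mem_Icc_iff.mp ht.1).2
      rw [hempty, measure_empty]
      exact zero_le
    set q := (finSuccEquiv ℝ d P).map (eval y)
    have hq (t : ℝ) : q.eval t = eval (Fin.cons t y) P := (eval_eq_eval_mv_eval' y t P).symm
    have hsub : {t : ℝ | Fin.cons t y ∈ A} ⊆ {t ∈ Icc (a 0) (b 0) | |q.eval t| < ε} :=
      fun t ht ↦ ⟨(Fin.cons_mem_Icc_iff.mp ht.1).1, (hq t).symm ▸ ht.2⟩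
    refine (measure_mono hsub).trans ?_
    by_cases hyZ : y ∈ Z
    · rw [indicator_of_mem hyZ, ← Real.volume_Icc]
      exact (measure_mono (sep_subset _ _)).trans le_self_add
    · rw [indicator_of_notMem hyZ, indicator_of_mem hyQ, zero_add]
      exact volume_sublevel_Icc_le hk ((natDegree_map_eval_finSuccEquiv_le P y).trans hP) ht₀ hη
        (by rw [hq]; simpa [Z, hyQ] using hyZ) hε
  rw [volume_eq_lintegral_volume_cons (measurableSet_sublevel_Icc P a b ε)]
  refine (lintegral_mono hslice).trans_eq ?_
  rw [lintegral_add_left (measurable_const.indicator hZ), lintegral_indicator hZ,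
    lintegral_indicator measurableSet_Icc, setLIntegral_const, setLIntegral_const, mul_comm]

lemma Real.rpow_div_add_one_rpow {r : ℝ} (hr : 0 ≤ r) {d : ℝ} (hd : d ≠ 0) (k : ℝ) :
    (r ^ (d / (d + 1))) ^ (1 / (d * k)) = r ^ (1 / ((d + 1) * k)) := by
  rw [← Real.rpow_mul hr]
  congr 1
  field_simp

lemma Real.div_rpow_div_add_one_rpow {r : ℝ} (hr : 0 < r) {d : ℝ} (hd : d + 1 ≠ 0) (k : ℝ) :
    (r / r ^ (d / (d + 1))) ^ (1 / k) = r ^ (1 / ((d + 1) * k)) := by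
  nth_rw 1 [← Real.rpow_one r]
  rw [← Real.rpow_sub hr, ← Real.rpow_mul hr.le]
  congr 1
  field_simp
  ring

theorem volume_sublevel_Icc_pi_le {k : ℕ} (hk : 0 < k) {d : ℕ} (hd : 0 < d)
    {P : MvPolynomial (Fin d) ℝ} (hP : P.totalDegree ≤ k) {a b z : Fin d → ℝ} (hz : z ∈ Icc a b)
    {M ε : ℝ} (hM : 0 < M) (hMz : M ≤ |eval z P|) (hε : 0 < ε) :
    volume {x ∈ Icc a b | |eval x P| < ε} ≤
      ENNReal.ofReal (d * (k + 1) ^ 2 * (ε / M) ^ (1 / (d * k) : ℝ)) * volume (Icc a b) := by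
  induction d, hd using Nat.le_induction generalizing M ε with
  | base =>
    have hz0 := (Fin.cons_mem_Icc_iff.mp ((Fin.cons_self_tail z).symm ▸ hz)).1
    have hZ : {y ∈ Icc (Fin.tail a) (Fin.tail b) | |eval (Fin.cons (z 0) y) P| < M} = ∅ :=
      eq_empty_of_forall_notMem fun y ⟨_, hy⟩ ↦ by
        rw [Subsingleton.elim y (Fin.tail z), Fin.cons_self_tail] at hy
        exact hy.not_ge hMz
    refine (volume_sublevel_Icc_pi_succ_le hk hP hz0 hε hM).trans_eq ?_
    rw [hZ, measure_empty, zero_mul, zero_add, volume_Icc_pi_succ,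
      ENNReal.ofReal_mul (by positivity), Nat.cast_one, one_mul, one_mul, mul_assoc]
  | succ d hd ih =>
    have hz0 := Fin.cons_mem_Icc_iff.mp ((Fin.cons_self_tail z).symm ▸ hz)
    set r := ε / M
    have hr : 0 < r := div_pos hε hM
    set η := M * r ^ ((d : ℝ) / (d + 1))
    have hη : 0 < η := by positivity
    have hZ := ih (P := (finSuccEquiv ℝ d P).eval (C (z 0)))
      ((totalDegree_eval_C_finSuccEquiv_le P _).trans hP) hz0.2 hM
      (by rwa [eval_eval_C_finSuccEquiv, Fin.cons_self_tail]) hη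
    rw [mul_div_cancel_left₀ _ hM.ne', Real.rpow_div_add_one_rpow hr.le (by positivity)] at hZ
    simp only [eval_eval_C_finSuccEquiv] at hZ
    refine (volume_sublevel_Icc_pi_succ_le hk hP hz0.1 hε hη).trans ?_
    rw [show ε / η = r / r ^ ((d : ℝ) / (d + 1)) from div_mul_eq_div_div ε M _,
      Real.div_rpow_div_add_one_rpow hr (by positivity), volume_Icc_pi_succ]
    push_cast
    set s := r ^ (1 / ((d + 1) * k) : ℝ)
    set V := volume (Icc (Fin.tail a) (Fin.tail b))
    calc _ ≤ ENNReal.ofReal (d * (k + 1) ^ 2 * s) * V * ENNReal.ofReal (b 0 - a 0) +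
          ENNReal.ofReal ((k + 1) ^ 2 * s * (b 0 - a 0)) * V := by gcongr
      _ = ENNReal.ofReal (d * (k + 1) ^ 2 * s + (k + 1) ^ 2 * s) *
            (ENNReal.ofReal (b 0 - a 0) * V) := by
          rw [ENNReal.ofReal_add (by positivity) (by positivity),
            ENNReal.ofReal_mul (p := (k + 1) ^ 2 * s) (by positivity)]
          ring
      _ = _ := by ring_nf

lemma EuclideanSpace.exists_volume_Icc_eq_mul_volume_closedBall (ι : Type*) [Fintype ι] :
    ∃ c : ℝ, 0 < c ∧ ∀ (x₀ : EuclideanSpace ℝ ι) {ρ : ℝ}, 0 ≤ ρ →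
      volume (Icc (fun i ↦ x₀ i - ρ) (fun i ↦ x₀ i + ρ)) =
        ENNReal.ofReal c * volume (Metric.closedBall x₀ ρ) := by
  set ω := volume (Metric.ball (0 : EuclideanSpace ℝ ι) 1)
  have hω : 0 < ω.toReal :=
    ENNReal.toReal_pos (Metric.measure_ball_pos _ _ one_pos).ne' measure_ball_lt_top.ne
  refine ⟨2 ^ Fintype.card ι / ω.toReal, by positivity, fun x₀ ρ hρ ↦ ?_⟩
  rw [Real.volume_Icc_pi, Measure.addHaar_closedBall _ _ hρ, finrank_euclideanSpace,
    ← ENNReal.ofReal_toReal (measure_ball_lt_top (μ := volume)).ne,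
    ← ENNReal.ofReal_mul (by positivity), ← ENNReal.ofReal_mul (by positivity)]
  simp only [add_sub_sub_cancel, Finset.prod_const, Finset.card_univ]
  rw [← ENNReal.ofReal_pow (by positivity)]
  congr 1
  field_simp
  ring

lemma EuclideanSpace.preimage_toLp_closedBall_subset_Icc {ι : Type*} [Fintype ι]
    (x₀ : EuclideanSpace ℝ ι) (ρ : ℝ) :
    WithLp.toLp 2 ⁻¹' Metric.closedBall x₀ ρ ⊆ Icc (fun i ↦ x₀ i - ρ) (fun i ↦ x₀ i + ρ) := by
  rw [← pi_univ_Icc]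
  intro y hy i _
  show y i ∈ Icc _ _
  rw [← Real.closedBall_eq_Icc]
  exact (PiLp.dist_apply_le _ x₀ i).trans hy

lemma Real.biSup_eq_of_isMaxOn {α : Type*} {f : α → ℝ} {s : Set α} {z : α} (hz : z ∈ s)
    (hmax : IsMaxOn f s z) (h0 : 0 ≤ f z) : ⨆ x ∈ s, f x = f z := by
  have hle (x : α) : ⨆ _ : x ∈ s, f x ≤ f z := Real.iSup_le (fun hx ↦ hmax hx) h0
  refine le_antisymm (Real.iSup_le hle h0) ?_
  exact le_ciSup_of_le ⟨f z, forall_mem_range.mpr hle⟩ z (by rw [ciSup_pos hz])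

lemma MvPolynomial.exists_eval_ne_zero_of_isOpen {σ : Type*} [Fintype σ] {P : MvPolynomial σ ℝ}
    (hP : P ≠ 0) {U : Set (σ → ℝ)} (hU : IsOpen U) (hne : U.Nonempty) :
    ∃ x ∈ U, eval x P ≠ 0 := by
  obtain ⟨c, hc⟩ := hne
  obtain ⟨r, hr, hball⟩ := Metric.isOpen_iff.mp hU c hc
  by_contra! h
  refine hP (funext_set (fun i ↦ Metric.ball (c i) r) (fun i ↦ ?_) fun x hx ↦ ?_)
  · rw [Real.ball_eq_Ioo]; exact Ioo_infinite (by linarith)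
  · rw [map_zero, h x (hball (by rwa [ball_pi c hr]))]

/-- Remez-type inequality (Kleinbock–Tomanov form): for all `d, k ≥ 1` there
is `C > 0` such that for every nonzero polynomial `P` on `ℝ^d` of total
degree at most `k`, every ball `B` and every `ε > 0`,
`Leb{x ∈ B : |P(x)| < ε} ≤ C (ε / sup_B |P|)^{1/(dk)} Leb(B)`. -/
theorem remez_inequality (d k : ℕ) (hd : 0 < d) (hk : 0 < k) :
    ∃ C : ℝ, 0 < C ∧
      ∀ P : MvPolynomial (Fin d) ℝ, P ≠ 0 → P.totalDegree ≤ k →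
        ∀ (x₀ : EuclideanSpace ℝ (Fin d)) (ρ : ℝ), 0 < ρ →
          ∀ ε : ℝ, 0 < ε →
            volume {x : EuclideanSpace ℝ (Fin d) |
                x ∈ Metric.closedBall x₀ ρ ∧
                  |MvPolynomial.eval (fun i => x i) P| < ε} ≤
              ENNReal.ofReal
                  (C * (ε / ⨆ x ∈ Metric.closedBall x₀ ρ,
                      |MvPolynomial.eval (fun i => x i) P|) ^
                    (1 / (d * k : ℝ))) *
                volume (Metric.closedBall x₀ ρ) := by
  obtain ⟨c, hc, hvol⟩ := EuclideanSpace.exists_volume_Icc_eq_mul_volume_closedBall (Fin d)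
  refine ⟨d * (k + 1) ^ 2 * c, by positivity, fun P hP hdeg x₀ ρ hρ ε hε ↦ ?_⟩
  have hcont : Continuous fun x : EuclideanSpace ℝ (Fin d) ↦ |eval (fun i ↦ x i) P| :=
    continuous_abs.comp ((continuous_eval P).comp (PiLp.continuous_ofLp 2 _))
  obtain ⟨z, hzB, hzmax⟩ := (isCompact_closedBall x₀ ρ).exists_isMaxOn
    (Metric.nonempty_closedBall.mpr hρ.le) hcont.continuousOn
  obtain ⟨y, hyB, hy⟩ := exists_eval_ne_zero_of_isOpen hP (U := WithLp.toLp 2 ⁻¹' Metric.ball x₀ ρ)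
    (Metric.isOpen_ball.preimage (PiLp.continuous_toLp 2 _)) ⟨x₀.ofLp, by simpa using hρ⟩
  have hM : 0 < |eval (fun i ↦ z i) P| :=
    (abs_pos.mpr hy).trans_le (hzmax (Metric.ball_subset_closedBall hyB))
  have hpres := (EuclideanSpace.volume_preserving_symm_measurableEquiv_toLp (Fin d)).symm
  rw [Real.biSup_eq_of_isMaxOn hzB hzmax (abs_nonneg _)]
  calc _ = volume (WithLp.toLp 2 ⁻¹'
          {x ∈ Metric.closedBall x₀ ρ | |eval (fun i ↦ x i) P| < ε}) :=
        (hpres.measure_preimage_equiv _).symm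
    _ ≤ volume {y ∈ Icc (fun i ↦ x₀ i - ρ) (fun i ↦ x₀ i + ρ) | |eval y P| < ε} :=
        measure_mono fun y hy ↦
          ⟨EuclideanSpace.preimage_toLp_closedBall_subset_Icc x₀ ρ hy.1, hy.2⟩
    _ ≤ _ := volume_sublevel_Icc_pi_le hk hd hdeg
        (EuclideanSpace.preimage_toLp_closedBall_subset_Icc x₀ ρ hzB) hM le_rfl hε
    _ = _ := by
      rw [hvol x₀ hρ.le, ← mul_assoc, ← ENNReal.ofReal_mul (by positivity)]
      congr 2
      ring
end
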